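/- arXiv:2202.09091 — 2 statements merged into one kernel-verified Lean document; each statement's English description precedes it below -/
import Mathlib

section
/- Let q be a primitive word and x a nonempty word with x ≠ q. If x is a prefix of q, then q^k x is primitive for all k ≥ 2. -/
variable {A : Type*}

/-- k-fold concatenation of a word with itself. -/
def pw (w : List A) : ℕ → List A
  | 0 => []
  | n + 1 => w ++ pw w n

/-- A nonempty word is primitive if it is not a proper power. -/
def Primitive (w : List A) : Prop :=
  w ≠ [] ∧ ∀ (v : List A) (m : ℕ), w = pw v m → m = 1

lemma pw_length (w : List A) : ∀ n, (pw w n).length = n * w.length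
  | 0 => by simp [pw]
  | n + 1 => by
    simp only [pw, List.length_append, pw_length w n]
    ring

lemma pw_succ_right (w : List A) : ∀ n, pw w (n + 1) = pw w n ++ w
  | 0 => by simp [pw]
  | n + 1 => by
    show w ++ pw w (n + 1) = (w ++ pw w n) ++ w
    rw [pw_succ_right w n, List.append_assoc]

lemma pw_getElem? (w : List A) : ∀ n j, j < n * w.length →
    (pw w n)[j]? = w[j % w.length]? := by
  intro n
  induction n with
  | zero => intro j hj; simp at hj
  | succ n ih =>
    intro j hj
    show (w ++ pw w n)[j]? = _
    rw [List.getElem?_append]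
    by_cases h : j < w.length
    · rw [if_pos h, Nat.mod_eq_of_lt h]
    · push_neg at h
      rw [if_neg (by omega), ih (j - w.length) (by
        have : (n + 1) * w.length = n * w.length + w.length := by ring
        omega), Nat.mod_eq_sub_mod h]

/-- `l` has period `p` (index formulation). -/
def Per (l : List A) (p : ℕ) : Prop := ∀ i, i + p < l.length → l[i]? = l[i + p]?

lemma per_pw (w : List A) (n : ℕ) : Per (pw w n) w.length := by
  intro i hi
  rw [pw_length] at hi
  rcases Nat.eq_zero_or_pos w.length with h | h
  · simp [h] at hi
  · rw [pw_getElem? w n i (by omega), pw_getElem? w n (i + w.length) hi,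
      Nat.add_mod_right]

lemma per_prefix {l l' : List A} (h : l <+: l') {p : ℕ} (hp : Per l' p) : Per l p := by
  intro i hi
  obtain ⟨t, rfl⟩ := h
  have h1 := hp i (by simp only [List.length_append]; omega)
  rw [List.getElem?_append, List.getElem?_append, if_pos (by omega : i < l.length),
    if_pos hi] at h1
  exact h1

lemma per_mod_get {l : List A} {d : ℕ} (hd : 0 < d) (h : Per l d) :
    ∀ j, j < l.length → l[j]? = l[j % d]? := by
  intro j
  induction j using Nat.strong_induction_on with
  | _ j ih =>
    intro hj
    by_cases hjd : j < d
    · rw [Nat.mod_eq_of_lt hjd]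
    · push_neg at hjd
      have h1 := h (j - d) (by omega)
      rw [show j - d + d = j from by omega] at h1
      rw [← h1, ih (j - d) (by omega) (by omega), Nat.mod_eq_sub_mod hjd]

lemma per_sub {l : List A} {p q : ℕ} (hp : Per l p) (hq : Per l q) (hpq : p ≤ q)
    (hlen : p + q ≤ l.length) : Per l (q - p) := by
  intro i hi
  by_cases h : p ≤ i
  · have h1 := hq (i - p) (by omega)
    have h2 := hp (i - p) (by omega)
    rw [show i - p + p = i from by omega] at h2
    rw [show i - p + q = i + (q - p) from by omega] at h1
    rw [← h2, h1]
  · have h1 := hq i (by omega)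
    have h2 := hp (i + (q - p)) (by omega)
    rw [show i + (q - p) + p = i + q from by omega] at h2
    rw [h1, h2]

lemma per_mod {l : List A} {p : ℕ} (hp0 : 0 < p) (hp : Per l p) :
    ∀ q, Per l q → p + q ≤ l.length → Per l (q % p) := by
  intro q
  induction q using Nat.strong_induction_on with
  | _ q ih =>
    intro hq hlen
    by_cases h : q < p
    · rwa [Nat.mod_eq_of_lt h]
    · push_neg at h
      rw [Nat.mod_eq_sub_mod h]
      exact ih (q - p) (by omega) (per_sub hp hq h hlen) (by omega)

lemma per_gcd {l : List A} : ∀ p {q : ℕ}, Per l p → Per l q → p + q ≤ l.length →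
    Per l (Nat.gcd p q) := by
  intro p
  induction p using Nat.strong_induction_on with
  | _ p ih =>
    intro q hp hq hlen
    rcases Nat.eq_zero_or_pos p with rfl | hp0
    · simpa using hq
    · rw [Nat.gcd_rec]
      exact ih (q % p) (Nat.mod_lt _ hp0) (per_mod hp0 hp q hq hlen) hp
        (by have := Nat.mod_le q p; omega)

lemma reconstruct {l : List A} {d : ℕ} (hd0 : 0 < d) (hdl : d ∣ l.length)
    (h : Per l d) : l = pw (l.take d) (l.length / d) := by
  obtain ⟨e, he⟩ := hdl
  rcases Nat.eq_zero_or_pos e with rfl | he0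
  · have hl : l = [] := by simpa using he
    subst hl
    simp [pw]
  · have hdle : d ≤ l.length := by
      calc d = d * 1 := by ring
      _ ≤ d * e := Nat.mul_le_mul_left d he0
      _ = l.length := he.symm
    have htake : (l.take d).length = d := by simp; omega
    have hlen2 : (pw (l.take d) (l.length / d)).length = l.length := by
      rw [pw_length, htake, he, Nat.mul_div_cancel_left e hd0]
      ring
    have hdd : l.length / d * d = l.length := Nat.div_mul_cancel ⟨e, he⟩
    apply List.ext_getElem?
    intro j
    by_cases hj : j < l.length
    · rw [pw_getElem? _ _ j (by rw [htake]; omega), htake,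
        List.getElem?_take, if_pos (Nat.mod_lt j hd0), ← per_mod_get hd0 h j hj]
    · rw [List.getElem?_eq_none (by omega), List.getElem?_eq_none (by omega)]

theorem prefix_pow_primitive (q x : List A) (hq : Primitive q) (hx : x ≠ []) (hxq : x ≠ q)
    (hpre : ∃ y : List A, q = x ++ y) (k : ℕ) (hk : 2 ≤ k) :
    Primitive (pw q k ++ x) := by
  obtain ⟨y, hy⟩ := hpre
  have hxpos : 0 < x.length := List.length_pos_iff.mpr hx
  have hxq' : x.length < q.length := by
    rcases eq_or_ne y [] with rfl | hy0
    · exact absurd (by simpa using hy.symm) hxq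
    · have := List.length_pos_iff.mpr hy0
      rw [hy]; simp; omega
  have hqpos : 0 < q.length := by omega
  set w := pw q k ++ x with hwdef
  have hwne : w ≠ [] := by simp [hwdef, hx]
  have hwl : w.length = k * q.length + x.length := by
    simp [hwdef, pw_length]
  refine ⟨hwne, ?_⟩
  intro v m hw
  by_contra hm1
  have hm0 : m ≠ 0 := by
    rintro rfl
    exact hwne (by simpa [pw] using hw)
  have hm2 : 2 ≤ m := by omega
  have hwl2 : w.length = m * v.length := by rw [hw, pw_length]
  have hvpos : 0 < v.length := by
    rcases Nat.eq_zero_or_pos v.length with h0 | h0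
    · rw [h0, Nat.mul_zero] at hwl2
      omega
    · exact h0
  -- w is a prefix of pw q (k+1), hence has period q.length
  have hwpre : w <+: pw q (k + 1) := by
    refine ⟨y, ?_⟩
    rw [pw_succ_right, hwdef, List.append_assoc, ← hy]
  have hperq : Per w q.length := per_prefix hwpre (per_pw q (k + 1))
  have hperv : Per w v.length := by rw [hw]; exact per_pw v m
  have hsum : v.length + q.length ≤ w.length := by
    have h1 := Nat.mul_le_mul_right v.length hm2
    have h2 := Nat.mul_le_mul_right q.length hk
    omega
  have hperd : Per w (Nat.gcd v.length q.length) := per_gcd _ hperv hperq hsum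
  set d := Nat.gcd v.length q.length with hddef
  have hd0 : 0 < d := Nat.gcd_pos_of_pos_left _ hvpos
  have hdq : d ∣ q.length := Nat.gcd_dvd_right _ _
  -- q is a prefix of w
  have hqpre : q <+: w := by
    obtain ⟨k', rfl⟩ : ∃ k', k = k' + 1 := ⟨k - 1, by omega⟩
    exact ⟨pw q k' ++ x, by rw [hwdef]; show _ = (q ++ pw q k') ++ x; simp⟩
  have hperq' : Per q d := per_prefix hqpre hperd
  have hrec := reconstruct hd0 hdq hperq'
  have hone : q.length / d = 1 := hq.2 _ _ hrec
  have hdq' : d = q.length := by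
    have := Nat.div_mul_cancel hdq
    rw [hone, one_mul] at this
    exact this
  have hdvdv : q.length ∣ v.length := hdq' ▸ Nat.gcd_dvd_left _ _
  have hdvdw : q.length ∣ w.length := hwl2 ▸ Dvd.dvd.mul_left hdvdv m
  have hdvdx : q.length ∣ x.length := by
    have h1 : q.length ∣ k * q.length := Dvd.dvd.mul_left dvd_rfl k
    have := Nat.dvd_sub hdvdw h1
    rw [hwl, Nat.add_sub_cancel_left] at this
    exact this
  exact absurd (Nat.le_of_dvd hxpos hdvdx) (by omega)
end

section
/- Let q be a primitive word and x a nonempty word with x ≠ q. If x is a suffix of q, then x q^k is primitive for all k ≥ 2. -/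
variable {A : Type*}

lemma length_pw (w : List A) (n : ℕ) : (pw w n).length = n * w.length := by
  induction n with
  | zero => simp [pw]
  | succ n ih => simp [pw, ih]; ring

lemma getElem?_pw (v : List A) (m i : ℕ) (h : i < m * v.length) :
    (pw v m)[i]? = v[i % v.length]? := by
  induction m generalizing i with
  | zero => omega
  | succ m ih =>
    have hm : (m + 1) * v.length = m * v.length + v.length := by ring
    show (v ++ pw v m)[i]? = _
    rw [List.getElem?_append]
    by_cases hi : i < v.length
    · rw [if_pos hi, Nat.mod_eq_of_lt hi]
    · rw [if_neg hi, ih (i - v.length) (by omega)]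
      conv_rhs => rw [Nat.mod_eq_sub_mod (show v.length ≤ i by omega)]

lemma mod_period (w : List A) (d : ℕ) (hd : 0 < d)
    (hper : ∀ j, j + d < w.length → w[j]? = w[j + d]?) :
    ∀ i < w.length, w[i]? = w[i % d]? := by
  intro i
  induction i using Nat.strong_induction_on with
  | _ i ih =>
    intro hi
    by_cases hlt : i < d
    · rw [Nat.mod_eq_of_lt hlt]
    · have h1 : w[i - d]? = w[i]? := by
        have := hper (i - d) (by omega)
        rwa [Nat.sub_add_cancel (by omega)] at this
      rw [← h1, ih (i - d) (by omega) (by omega)]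
      conv_rhs => rw [Nat.mod_eq_sub_mod (show d ≤ i by omega)]

lemma period_eq_pw (w : List A) (d : ℕ) (hd : 0 < d) (hdvd : d ∣ w.length)
    (hlen : 0 < w.length)
    (hper : ∀ j, j + d < w.length → w[j]? = w[j + d]?) :
    w = pw (w.take d) (w.length / d) := by
  have hdle : d ≤ w.length := Nat.le_of_dvd hlen hdvd
  have hlt : (w.take d).length = d := by simp [List.length_take]; omega
  apply List.ext_getElem?
  intro i
  by_cases hi : i < w.length
  · rw [getElem?_pw _ _ _ (by rw [hlt, Nat.div_mul_cancel hdvd]; exact hi), hlt,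
      List.getElem?_take, if_pos (Nat.mod_lt _ hd), mod_period w d hd hper i hi]
  · rw [List.getElem?_eq_none (by omega), List.getElem?_eq_none]
    rw [length_pw, hlt, Nat.div_mul_cancel hdvd]; omega

/-- Fine and Wilf periodicity lemma, ordered version. -/
lemma finewilf_aux {β : Type*} (N : ℕ) : ∀ (p q L : ℕ) (f : ℕ → β), p + q ≤ N →
    0 < p → p ≤ q → p + q ≤ L →
    (∀ i, i + p < L → f i = f (i + p)) → (∀ i, i + q < L → f i = f (i + q)) →
    ∀ i, i + Nat.gcd p q < L → f i = f (i + Nat.gcd p q) := by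
  induction N using Nat.strong_induction_on with
  | _ N IH =>
    intro p q L f hN hp hpq hL h1 h2 i hi
    rcases eq_or_lt_of_le hpq with heq | hlt
    · subst heq
      rw [Nat.gcd_self] at hi ⊢
      exact h1 i hi
    · -- p < q
      have hq'pos : 0 < q - p := by omega
      have hgcd : Nat.gcd p q = Nat.gcd p (q - p) := by
        conv_lhs => rw [show q = (q - p) + p by omega, Nat.gcd_add_self_right]
      have hdq' : Nat.gcd p q ∣ q - p := by rw [hgcd]; exact Nat.gcd_dvd_right _ _
      have hdpos : 0 < Nat.gcd p q := Nat.gcd_pos_of_pos_left _ hp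
      have hdle : Nat.gcd p q ≤ q - p := Nat.le_of_dvd hq'pos hdq'
      have h1' : ∀ j, j + p < L - p → f j = f (j + p) := fun j hj => h1 j (by omega)
      have h2' : ∀ j, j + (q - p) < L - p → f j = f (j + (q - p)) := by
        intro j hj
        have e1 : f j = f (j + q) := h2 j (by omega)
        have e2 : f (j + (q - p)) = f (j + (q - p) + p) := h1 (j + (q - p)) (by omega)
        rw [e1, e2]; congr 1; omega
      have hrec : ∀ j, j + Nat.gcd p q < L - p → f j = f (j + Nat.gcd p q) := by
        rcases le_or_gt p (q - p) with hord | hord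
        · rw [hgcd]
          exact IH (p + (q - p)) (by omega) p (q - p) (L - p) f le_rfl hp hord
            (by omega) h1' h2'
        · rw [hgcd, Nat.gcd_comm]
          exact IH ((q - p) + p) (by omega) (q - p) p (L - p) f le_rfl hq'pos
            (le_of_lt hord) (by omega) h2' h1'
      by_cases hcase : i + Nat.gcd p q < L - p
      · exact hrec i hcase
      · have hip : p ≤ i := by omega
        have e1 : f (i - p) = f i := by
          have := h1 (i - p) (by omega)
          rwa [Nat.sub_add_cancel hip] at this
        have e2 : f (i - p + Nat.gcd p q) = f (i + Nat.gcd p q) := by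
          have := h1 (i - p + Nat.gcd p q) (by omega)
          rwa [show i - p + Nat.gcd p q + p = i + Nat.gcd p q by omega] at this
        rw [← e1, ← e2]
        exact hrec (i - p) (by omega)

/-- Fine and Wilf periodicity lemma. -/
lemma finewilf {β : Type*} (p q L : ℕ) (f : ℕ → β)
    (hp : 0 < p) (hq : 0 < q) (hL : p + q ≤ L)
    (h1 : ∀ i, i + p < L → f i = f (i + p)) (h2 : ∀ i, i + q < L → f i = f (i + q)) :
    ∀ i, i + Nat.gcd p q < L → f i = f (i + Nat.gcd p q) := by
  rcases le_or_gt p q with h | h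
  · exact finewilf_aux (p + q) p q L f le_rfl hp h hL h1 h2
  · intro i hi
    rw [Nat.gcd_comm] at hi ⊢
    exact finewilf_aux (q + p) q p L f le_rfl hq (le_of_lt h) (by omega) h2 h1 i hi

theorem suffix_pow_primitive (q x : List A) (hq : Primitive q) (hx : x ≠ []) (hxq : x ≠ q)
    (hsuf : ∃ y : List A, q = y ++ x) (k : ℕ) (hk : 2 ≤ k) :
    Primitive (x ++ pw q k) := by
  obtain ⟨y, hy⟩ := hsuf
  have hqne : q ≠ [] := hq.1
  have hPpos : 0 < q.length := List.length_pos_iff.mpr hqne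
  have hXpos : 0 < x.length := List.length_pos_iff.mpr hx
  have hyne : y ≠ [] := by rintro rfl; simp at hy; exact hxq hy.symm
  have hYpos : 0 < y.length := List.length_pos_iff.mpr hyne
  have hXY : y.length + x.length = q.length := by rw [hy]; simp
  have hLval : (x ++ pw q k).length = x.length + k * q.length := by simp [length_pw]
  have hk1 : (k + 1) * q.length = k * q.length + q.length := by ring
  -- key formula
  have hkey : ∀ i < (x ++ pw q k).length,
      (x ++ pw q k)[i]? = q[(i + y.length) % q.length]? := by
    intro i hi
    have hexp : pw q (k + 1) = y ++ (x ++ pw q k) := by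
      show q ++ pw q k = _
      nth_rewrite 1 [hy]
      rw [List.append_assoc]
    have e1 : (pw q (k + 1))[y.length + i]? = (x ++ pw q k)[i]? := by
      rw [hexp, List.getElem?_append_right (by omega)]
      congr 1; omega
    rw [← e1, getElem?_pw q (k + 1) (y.length + i) (by omega), Nat.add_comm y.length i]
  constructor
  · simp [hx]
  intro v m hvm
  have hLm : (x ++ pw q k).length = m * v.length := by rw [hvm, length_pw]
  rcases m with _ | _ | m
  · exfalso
    rw [pw] at hvm
    exact hx (List.append_eq_nil_iff.mp hvm).1
  · rfl
  exfalso
  have hm' : (m + 1 + 1) * v.length = m * v.length + v.length + v.length := by ring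
  have hVpos : 0 < v.length := by
    rcases Nat.eq_zero_or_pos v.length with h0 | h
    · have : (m + 1 + 1) * v.length = 0 := by rw [h0, mul_zero]
      omega
    · exact h
  have h2P : 2 * q.length ≤ k * q.length := Nat.mul_le_mul_right _ hk
  -- periods
  have hperP : ∀ i, i + q.length < (x ++ pw q k).length →
      (x ++ pw q k)[i]? = (x ++ pw q k)[i + q.length]? := by
    intro i hi
    rw [hkey i (by omega), hkey (i + q.length) hi]
    congr 1
    conv_rhs => rw [show i + q.length + y.length = i + y.length + q.length by omega,
      Nat.add_mod_right]
  have hperV : ∀ i, i + v.length < (x ++ pw q k).length →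
      (x ++ pw q k)[i]? = (x ++ pw q k)[i + v.length]? := by
    intro i hi
    rw [hvm]
    rw [getElem?_pw v _ i (by rw [← length_pw, ← hvm]; omega),
      getElem?_pw v _ (i + v.length) (by rw [← length_pw, ← hvm]; omega),
      Nat.add_mod_right]
  have hsum : q.length + v.length ≤ (x ++ pw q k).length := by omega
  have hdP : Nat.gcd q.length v.length ∣ q.length := Nat.gcd_dvd_left _ _
  have hdpos : 0 < Nat.gcd q.length v.length := Nat.gcd_pos_of_pos_left _ hPpos
  have hdle : Nat.gcd q.length v.length ≤ q.length := Nat.le_of_dvd hPpos hdP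
  have hfw := finewilf q.length v.length (x ++ pw q k).length
    (fun i => (x ++ pw q k)[i]?) hPpos hVpos hsum hperP hperV
  -- q has period gcd
  have hqper : ∀ j, j + Nat.gcd q.length v.length < q.length →
      q[j]? = q[j + Nat.gcd q.length v.length]? := by
    intro j hj
    have h1 : (x ++ pw q k)[x.length + j]? =
        (x ++ pw q k)[x.length + j + Nat.gcd q.length v.length]? :=
      hfw (x.length + j) (by omega)
    have e1 : (x ++ pw q k)[x.length + j]? = q[j]? := by
      rw [hkey (x.length + j) (by omega)]
      congr 1
      rw [show x.length + j + y.length = j + q.length by omega, Nat.add_mod_right,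
        Nat.mod_eq_of_lt (by omega)]
    have e2 : (x ++ pw q k)[x.length + j + Nat.gcd q.length v.length]? =
        q[j + Nat.gcd q.length v.length]? := by
      rw [hkey (x.length + j + Nat.gcd q.length v.length) (by omega)]
      congr 1
      rw [show x.length + j + Nat.gcd q.length v.length + y.length =
        j + Nat.gcd q.length v.length + q.length by omega, Nat.add_mod_right,
        Nat.mod_eq_of_lt (by omega)]
    rw [← e1, ← e2, h1]
  -- primitivity forces gcd = q.length
  have hone := hq.2 (q.take (Nat.gcd q.length v.length))
    (q.length / Nat.gcd q.length v.length)
    (period_eq_pw q (Nat.gcd q.length v.length) hdpos hdP hPpos hqper)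
  have hmul : Nat.gcd q.length v.length * (q.length / Nat.gcd q.length v.length)
      = q.length := Nat.mul_div_cancel' hdP
  have hdp : Nat.gcd q.length v.length = q.length := by
    rw [hone, mul_one] at hmul; exact hmul
  -- q.length divides v.length, hence divides total length: contradiction
  have hPV : q.length ∣ v.length := hdp ▸ Nat.gcd_dvd_right q.length v.length
  have hPL : q.length ∣ (x ++ pw q k).length := by
    rw [hLm]; exact Dvd.dvd.mul_left hPV _
  have hdx : q.length ∣ x.length := by
    have h1 : q.length ∣ x.length + k * q.length := hLval ▸ hPL
    exact (Nat.dvd_add_iff_left (dvd_mul_left q.length k)).mpr h1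
  have := Nat.le_of_dvd hXpos hdx
  omega
end
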